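/- arXiv:1206.0956 — 6 statements merged into one kernel-verified Lean document; each statement's English description precedes it below -/
import Mathlib

section
/- For any n ≥ 2 and 2 ≤ i ≤ n, A(n,i) ≥ min(A(n−1,i−1), A(n−1,i)). -/
open Finset

/-- ℓ1 (Hamming) weight of a `q`-ary vector of length `n`. -/
def hw {n q : ℕ} (x : Fin n → Fin q) : ℕ := ∑ k, (x k : ℕ)

/-- `E_q(n,i)`: the set of `q`-ary vectors of length `n` and weight `i`. -/
def lev (q n i : ℕ) : Finset (Fin n → Fin q) := Finset.univ.filter (fun x => hw x = i)

/-- Coordinatewise domination `x ≤ y`. -/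
def domLe {n q : ℕ} (x y : Fin n → Fin q) : Prop := ∀ k, (x k : ℕ) ≤ (y k : ℕ)

instance {n q : ℕ} (x y : Fin n → Fin q) : Decidable (domLe x y) :=
  inferInstanceAs (Decidable (∀ k, (x k : ℕ) ≤ (y k : ℕ)))

/-- `Y` covers `E_q(n,i-1)`: every vector of weight `i-1` is dominated by some `y ∈ Y`. -/
def Covers (q n i : ℕ) (Y : Finset (Fin n → Fin q)) : Prop :=
  ∀ x ∈ lev q n (i - 1), ∃ y ∈ Y, domLe x y

/-- A codeword class at level `i`: a subset of `E_q(n,i)` covering `E_q(n,i-1)`. -/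
def IsClass (q n i : ℕ) (Y : Finset (Fin n → Fin q)) : Prop :=
  Y ⊆ lev q n i ∧ Covers q n i Y

/-- `A_q(n,i)`: the maximum number of pairwise disjoint codeword classes in `E_q(n,i)`. -/
noncomputable def A (q n i : ℕ) : ℕ :=
  sSup {m | ∃ 𝒴 : Finset (Finset (Fin n → Fin q)),
    (∀ Y ∈ 𝒴, IsClass q n i Y) ∧
    (𝒴 : Set (Finset (Fin n → Fin q))).Pairwise Disjoint ∧ 𝒴.card = m}

/-!
Appending `0` to the words of a class at level `i` and `1` to those of a class at level `i - 1`
gives a class at level `i` one coordinate longer: a word of weight `i - 1` ending in the bit `b`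
is dominated, through its first coordinates, by a word of the class that receives the bit `b`.
Classes built from disjoint pairs are disjoint, since the last bit tells which part a word comes
from; so pairing `k` disjoint classes of each level gives `k` disjoint classes.
-/

open Function

variable {q m : ℕ}

lemma hw_snoc (v : Fin m → Fin q) (b : Fin q) :
    hw (Fin.snoc v b : Fin (m + 1) → Fin q) = hw v + b := by
  simp [hw, Fin.sum_univ_castSucc]

lemma domLe_snoc_iff {v w : Fin m → Fin q} {b c : Fin q} :
    domLe (Fin.snoc v b : Fin (m + 1) → Fin q) (Fin.snoc w c) ↔ domLe v w ∧ (b : ℕ) ≤ c := by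
  simp [domLe, Fin.forall_fin_succ']

lemma bddAbove_card_disjoint_classes (q n i : ℕ) :
    BddAbove {m | ∃ 𝒴 : Finset (Finset (Fin n → Fin q)), (∀ Y ∈ 𝒴, IsClass q n i Y) ∧
    (𝒴 : Set (Finset (Fin n → Fin q))).Pairwise Disjoint ∧ 𝒴.card = m} := by
  refine ⟨Fintype.card (Finset (Fin n → Fin q)), ?_⟩
  rintro _ ⟨𝒴, -, -, rfl⟩
  exact card_le_univ 𝒴

lemma le_A_of_embedding {n i k : ℕ} (Y : Fin k ↪ Finset (Fin n → Fin q))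
    (hY : ∀ j, IsClass q n i (Y j)) (hYd : Pairwise (Disjoint on ⇑Y)) : k ≤ A q n i := by
  refine le_csSup (bddAbove_card_disjoint_classes q n i)
    ⟨univ.map Y, by simpa using hY, ?_, by simp⟩
  simp only [coe_map, coe_univ, Set.image_univ]
  rintro _ ⟨a, rfl⟩ _ ⟨b, rfl⟩ hab
  exact hYd (ne_of_apply_ne Y hab)

lemma exists_embedding_of_le_A {n i k : ℕ} (hk : k ≤ A q n i) :
      ∃ Y : Fin k ↪ Finset (Fin n → Fin q),
      (∀ j, IsClass q n i (Y j)) ∧ Pairwise (Disjoint on ⇑Y) := by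
  have hbdd := bddAbove_card_disjoint_classes q n i
  obtain ⟨𝒴, h𝒴, h𝒴d, hcard⟩ := Nat.sSup_mem (by exact ⟨0, ∅, by simp, by simp, rfl⟩) hbdd
  let Y := (Fin.castLEEmb (hk.trans_eq hcard.symm)).trans
    (𝒴.equivFin.symm.toEmbedding.trans (Embedding.subtype (· ∈ 𝒴)))
  have hmem (j : Fin k) : Y j ∈ 𝒴 := (𝒴.equivFin.symm _).2
  exact ⟨Y, fun j => h𝒴 _ (hmem j), fun a b hab => h𝒴d (hmem a) (hmem b) (Y.injective.ne hab)⟩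

lemma le_A_iff {n i k : ℕ} : k ≤ A q n i ↔
    ∃ Y : Fin k ↪ Finset (Fin n → Fin q),
      (∀ j, IsClass q n i (Y j)) ∧ Pairwise (Disjoint on ⇑Y) :=
  ⟨exists_embedding_of_le_A, fun ⟨Y, hY, hYd⟩ => le_A_of_embedding Y hY hYd⟩

def concat (Y Z : Finset (Fin m → Fin 2)) : Finset (Fin (m + 1) → Fin 2) :=
  Y.image (Fin.snoc · 0) ∪ Z.image (Fin.snoc · 1)

section concat

variable {Y Z Y' Z' : Finset (Fin m → Fin 2)}

@[simp]
lemma snoc_zero_mem_concat {v : Fin m → Fin 2} :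
    (Fin.snoc v 0 : Fin (m + 1) → Fin 2) ∈ concat Y Z ↔ v ∈ Y := by
  simp [concat]

@[simp]
lemma snoc_one_mem_concat {v : Fin m → Fin 2} :
    (Fin.snoc v 1 : Fin (m + 1) → Fin 2) ∈ concat Y Z ↔ v ∈ Z := by
  simp [concat]

lemma concat_injective : Injective2 (concat (m := m)) := by
  intro Y Y' Z Z' h
  exact ⟨by ext v; simpa using congr((Fin.snoc v 0 : Fin (m + 1) → Fin 2) ∈ $h),
    by ext v; simpa using congr((Fin.snoc v 1 : Fin (m + 1) → Fin 2) ∈ $h)⟩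

lemma disjoint_concat (hY : Disjoint Y Y') (hZ : Disjoint Z Z') :
    Disjoint (concat Y Z) (concat Y' Z') := by
  rw [disjoint_left]
  intro w
  induction w using Fin.snocCases with
  | snoc v b =>
    fin_cases b
    · simpa using fun h => disjoint_left.1 hY h
    · simpa using fun h => disjoint_left.1 hZ h

lemma concat_subset_lev {i : ℕ} (hi : 1 ≤ i) (hY : Y ⊆ lev 2 m i) (hZ : Z ⊆ lev 2 m (i - 1)) :
    concat Y Z ⊆ lev 2 (m + 1) i := by
  intro w
  induction w using Fin.snocCases with
  | snoc v b =>
    fin_cases b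
    · simpa [lev, hw_snoc] using fun h => hY h
    · intro hv
      have := hZ (snoc_one_mem_concat.1 hv)
      simp only [lev, mem_filter, mem_univ, true_and, hw_snoc] at this ⊢
      omega

lemma covers_concat {i : ℕ} (hY : Covers 2 m i Y) (hZ : Covers 2 m (i - 1) Z) :
    Covers 2 (m + 1) i (concat Y Z) := by
  intro x
  induction x using Fin.snocCases with
  | snoc v b =>
    fin_cases b
    · intro hv
      obtain ⟨y, hy, hvy⟩ := hY v (by simpa [lev, hw_snoc] using hv)
      exact ⟨Fin.snoc y 0, by simpa using hy, domLe_snoc_iff.2 ⟨hvy, le_rfl⟩⟩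
    · intro hv
      obtain ⟨z, hz, hvz⟩ := hZ v (by simp [lev, hw_snoc] at hv ⊢; omega)
      exact ⟨Fin.snoc z 1, by simpa using hz, domLe_snoc_iff.2 ⟨hvz, le_rfl⟩⟩

lemma isClass_concat {i : ℕ} (hi : 1 ≤ i) (hY : IsClass 2 m i Y) (hZ : IsClass 2 m (i - 1) Z) :
    IsClass 2 (m + 1) i (concat Y Z) :=
  ⟨concat_subset_lev hi hY.1 hZ.1, covers_concat hY.2 hZ.2⟩

end concat

theorem stmt_3_general (n i : ℕ) (hn : 2 ≤ n) (hi : 2 ≤ i) :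
    min (A 2 (n - 1) (i - 1)) (A 2 (n - 1) i) ≤ A 2 n i := by
  obtain ⟨m, rfl⟩ : ∃ m, n = m + 1 := ⟨n - 1, by omega⟩
  obtain ⟨Y, hY, hYd⟩ := le_A_iff.1 (min_le_right (A 2 m (i - 1)) (A 2 m i))
  obtain ⟨Z, hZ, hZd⟩ := le_A_iff.1 (min_le_left (A 2 m (i - 1)) (A 2 m i))
  let W : Fin _ ↪ Finset (Fin (m + 1) → Fin 2) :=
    ⟨fun j => concat (Y j) (Z j), fun a b h => Y.injective (concat_injective h).1⟩
  exact le_A_iff.2 ⟨W, fun j => isClass_concat (by omega) (hY j) (hZ j),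
    fun a b hab => disjoint_concat (hYd hab) (hZd hab)⟩

/-- For n ≥ 2 and 2 ≤ i ≤ n, A(n,i) ≥ min(A(n-1,i-1), A(n-1,i)). -/
theorem stmt_3 (n i : ℕ) (hn : 2 ≤ n) (hi : 2 ≤ i) (hin : i ≤ n) :
    min (A 2 (n - 1) (i - 1)) (A 2 (n - 1) i) ≤ A 2 n i :=
  stmt_3_general n i hn hi
end

section
/- For any n ≥ 1, A(2n,2) ≥ 2·A(n,2) + 1. -/
open Finset

namespace Stmt4

variable {n N : ℕ}

def supp (y : Fin N → Fin 2) : Finset (Fin N) := univ.filter (fun k => y k = 1)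

lemma mem_supp {y : Fin N → Fin 2} {k : Fin N} : k ∈ supp y ↔ y k = 1 := by simp [supp]

lemma fin2_val (v : Fin 2) : (v : ℕ) = if v = 1 then 1 else 0 := by fin_cases v <;> rfl

lemma fin2_eq (v : Fin 2) : v = 0 ∨ v = 1 := by fin_cases v <;> simp

lemma hw_eq_card (y : Fin N → Fin 2) : hw y = (supp y).card := by
  rw [supp, Finset.card_filter, hw]
  exact Finset.sum_congr rfl (fun k _ => fin2_val _)

lemma eq_of_supp_eq {y y' : Fin N → Fin 2} (h : supp y = supp y') : y = y' := by
  funext k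
  have hiff : y k = 1 ↔ y' k = 1 := by rw [← mem_supp, ← mem_supp, h]
  rcases fin2_eq (y k) with h1 | h1 <;> rcases fin2_eq (y' k) with h2 | h2 <;> simp_all

def pd (u v : Fin N) : Fin N → Fin 2 := fun k => if k = u ∨ k = v then 1 else 0

lemma pd_one {u v k : Fin N} : pd u v k = 1 ↔ k = u ∨ k = v := by
  unfold pd; split <;> simp_all

lemma supp_pd (u v : Fin N) : supp (pd u v) = {u, v} := by
  ext k; simp [mem_supp, pd_one, Finset.mem_insert, Finset.mem_singleton]

lemma pd_mem_lev {u v : Fin N} (h : u ≠ v) : pd u v ∈ lev 2 N 2 := by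
  simp only [lev, Finset.mem_filter, Finset.mem_univ, true_and]
  rw [hw_eq_card, supp_pd, Finset.card_pair h]

lemma pd_eq_cases {u v u' v' : Fin N} (h : pd u v = pd u' v') :
    (u = u' ∨ u = v') ∧ (v = u' ∨ v = v') := by
  constructor
  · have h1 : pd u' v' u = 1 := by rw [← h]; exact pd_one.mpr (Or.inl rfl)
    exact pd_one.mp h1
  · have h1 : pd u' v' v = 1 := by rw [← h]; exact pd_one.mpr (Or.inr rfl)
    exact pd_one.mp h1

lemma covers_iff {Y : Finset (Fin N → Fin 2)} :
    Covers 2 N 2 Y ↔ ∀ j, ∃ y ∈ Y, y j = 1 := by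
  constructor
  · intro h j
    have hmem : pd j j ∈ lev 2 N (2 - 1) := by
      simp only [lev, Finset.mem_filter, Finset.mem_univ, true_and]
      rw [hw_eq_card, supp_pd]
      simp
    obtain ⟨y, hy, hd⟩ := h (pd j j) hmem
    have h1 := hd j
    have h2 : pd j j j = 1 := pd_one.mpr (Or.inl rfl)
    rw [h2] at h1
    have h3 := (y j).isLt
    exact ⟨y, hy, by omega⟩
  · intro h x hx
    have hx1 : (supp x).card = 1 := by
      have := (Finset.mem_filter.mp hx).2
      rw [hw_eq_card] at this
      simpa using this
    obtain ⟨j, hj⟩ := Finset.card_eq_one.mp hx1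
    obtain ⟨y, hy, hyj⟩ := h j
    refine ⟨y, hy, fun k => ?_⟩
    rcases fin2_eq (x k) with h1 | h1
    · simp [h1]
    · have : k ∈ supp x := mem_supp.mpr h1
      rw [hj, Finset.mem_singleton] at this
      subst this
      rw [h1, hyj]

lemma supp_eq_pair {y : Fin n → Fin 2} {a b : Fin n} (hy : y ∈ lev 2 n 2)
    (ha : a ∈ supp y) (hb : b ∈ supp y) (hab : a ≠ b) : supp y = {a, b} := by
  have hcard : (supp y).card = 2 := by
    have := (Finset.mem_filter.mp hy).2
    rwa [hw_eq_card] at this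
  refine (Finset.eq_of_subset_of_card_le ?_ ?_).symm
  · exact Finset.insert_subset ha (Finset.singleton_subset_iff.mpr hb)
  · rw [hcard, Finset.card_pair hab]

lemma eq_of_two_mem {y y' : Fin n → Fin 2} {a b : Fin n} (hy : y ∈ lev 2 n 2)
    (hy' : y' ∈ lev 2 n 2) (ha : a ∈ supp y) (hb : b ∈ supp y) (hab : a ≠ b)
    (ha' : a ∈ supp y') (hb' : b ∈ supp y') : y = y' :=
  eq_of_supp_eq ((supp_eq_pair hy ha hb hab).trans (supp_eq_pair hy' ha' hb' hab).symm)

lemma exists_other {y : Fin n → Fin 2} {a : Fin n} (hy : y ∈ lev 2 n 2)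
    (ha : a ∈ supp y) : ∃ b ∈ supp y, b ≠ a := by
  apply Finset.exists_mem_ne
  have := (Finset.mem_filter.mp hy).2
  rw [hw_eq_card] at this
  omega

def inl (a : Fin n) : Fin (2 * n) := ⟨a.1, by have := a.2; omega⟩
def inr (a : Fin n) : Fin (2 * n) := ⟨a.1 + n, by have := a.2; omega⟩

lemma inl_inj {a a' : Fin n} (h : inl a = inl a') : a = a' := by
  simpa [inl, Fin.ext_iff] using h

lemma inr_inj {a a' : Fin n} (h : inr a = inr a') : a = a' := by
  simp only [inr, Fin.ext_iff] at h ⊢; omega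

lemma inl_ne_inr {a b : Fin n} : inl a ≠ inr b := by
  have := a.2
  simp only [inl, inr, Ne, Fin.ext_iff]
  omega

def pairs (y : Fin n → Fin 2) : Finset (Fin n × Fin n) :=
  (supp y ×ˢ supp y).filter (fun p => p.1 ≠ p.2)

def cls (f g : Fin n → Fin (2 * n)) (Y : Finset (Fin n → Fin 2)) :
    Finset (Fin (2 * n) → Fin 2) :=
  Y.biUnion (fun y => (pairs y).image (fun p => pd (f p.1) (g p.2)))

lemma mem_cls {f g : Fin n → Fin (2 * n)} {Y : Finset (Fin n → Fin 2)}
    {z : Fin (2 * n) → Fin 2} :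
    z ∈ cls f g Y ↔ ∃ y ∈ Y, ∃ a b, a ∈ supp y ∧ b ∈ supp y ∧ a ≠ b ∧ z = pd (f a) (g b) := by
  constructor
  · intro h
    simp only [cls, Finset.mem_biUnion, Finset.mem_image, pairs, Finset.mem_filter,
      Finset.mem_product] at h
    obtain ⟨y, hy, ⟨a, b⟩, ⟨⟨ha, hb⟩, hab⟩, rfl⟩ := h
    exact ⟨y, hy, a, b, ha, hb, hab, rfl⟩
  · rintro ⟨y, hy, a, b, ha, hb, hab, rfl⟩
    simp only [cls, Finset.mem_biUnion, Finset.mem_image, pairs, Finset.mem_filter,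
      Finset.mem_product]
    exact ⟨y, hy, (a, b), ⟨⟨ha, hb⟩, hab⟩, rfl⟩

def T1 (Y : Finset (Fin n → Fin 2)) : Finset (Fin (2 * n) → Fin 2) :=
  cls inl inl Y ∪ cls inr inr Y

def T2 (Y : Finset (Fin n → Fin 2)) : Finset (Fin (2 * n) → Fin 2) :=
  cls inl inr Y

def DD (n : ℕ) : Finset (Fin (2 * n) → Fin 2) :=
  univ.image (fun j : Fin n => pd (inl j) (inr j))

end Stmt4
namespace Stmt4

variable {n : ℕ}

lemma isClass_T1 {Y : Finset (Fin n → Fin 2)} (hY : IsClass 2 n 2 Y) :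
    IsClass 2 (2 * n) 2 (T1 Y) := by
  obtain ⟨hsub, hcov⟩ := hY
  have hcov' := covers_iff.mp hcov
  constructor
  · intro z hz
    rcases Finset.mem_union.mp hz with h | h <;>
    · obtain ⟨y, hy, a, b, ha, hb, hab, rfl⟩ := mem_cls.mp h
      first
        | exact pd_mem_lev (fun he => hab (inl_inj he))
        | exact pd_mem_lev (fun he => hab (inr_inj he))
  · rw [covers_iff]
    intro j
    by_cases h : j.1 < n
    · obtain ⟨y, hy, hya⟩ := hcov' ⟨j.1, h⟩
      have ha : (⟨j.1, h⟩ : Fin n) ∈ supp y := mem_supp.mpr hya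
      obtain ⟨b, hb, hba⟩ := exists_other (hsub hy) ha
      refine ⟨pd (inl ⟨j.1, h⟩) (inl b), ?_, ?_⟩
      · exact Finset.mem_union_left _ (mem_cls.mpr ⟨y, hy, _, b, ha, hb, fun e => hba e.symm, rfl⟩)
      · exact pd_one.mpr (Or.inl (by simp [inl, Fin.ext_iff]))
    · have h2 := j.2
      obtain ⟨y, hy, hya⟩ := hcov' ⟨j.1 - n, by omega⟩
      have ha : (⟨j.1 - n, by omega⟩ : Fin n) ∈ supp y := mem_supp.mpr hya
      obtain ⟨b, hb, hba⟩ := exists_other (hsub hy) ha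
      refine ⟨pd (inr ⟨j.1 - n, by omega⟩) (inr b), ?_, ?_⟩
      · exact Finset.mem_union_right _ (mem_cls.mpr ⟨y, hy, _, b, ha, hb, fun e => hba e.symm, rfl⟩)
      · exact pd_one.mpr (Or.inl (by simp only [inr, Fin.ext_iff]; omega))

lemma isClass_T2 {Y : Finset (Fin n → Fin 2)} (hY : IsClass 2 n 2 Y) :
    IsClass 2 (2 * n) 2 (T2 Y) := by
  obtain ⟨hsub, hcov⟩ := hY
  have hcov' := covers_iff.mp hcov
  constructor
  · intro z hz
    obtain ⟨y, hy, a, b, ha, hb, hab, rfl⟩ := mem_cls.mp hz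
    exact pd_mem_lev inl_ne_inr
  · rw [covers_iff]
    intro j
    by_cases h : j.1 < n
    · obtain ⟨y, hy, hya⟩ := hcov' ⟨j.1, h⟩
      have ha : (⟨j.1, h⟩ : Fin n) ∈ supp y := mem_supp.mpr hya
      obtain ⟨b, hb, hba⟩ := exists_other (hsub hy) ha
      refine ⟨pd (inl ⟨j.1, h⟩) (inr b), ?_, ?_⟩
      · exact mem_cls.mpr ⟨y, hy, _, b, ha, hb, fun e => hba e.symm, rfl⟩
      · exact pd_one.mpr (Or.inl (by simp [inl, Fin.ext_iff]))
    · have h2 := j.2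
      obtain ⟨y, hy, hya⟩ := hcov' ⟨j.1 - n, by omega⟩
      have ha : (⟨j.1 - n, by omega⟩ : Fin n) ∈ supp y := mem_supp.mpr hya
      obtain ⟨b, hb, hba⟩ := exists_other (hsub hy) ha
      refine ⟨pd (inl b) (inr ⟨j.1 - n, by omega⟩), ?_, ?_⟩
      · exact mem_cls.mpr ⟨y, hy, b, _, hb, ha, hba, rfl⟩
      · exact pd_one.mpr (Or.inr (by simp only [inr, Fin.ext_iff]; omega))

lemma isClass_DD (hn : 1 ≤ n) : IsClass 2 (2 * n) 2 (DD n) := by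
  constructor
  · intro z hz
    obtain ⟨j, _, rfl⟩ := Finset.mem_image.mp hz
    exact pd_mem_lev inl_ne_inr
  · rw [covers_iff]
    intro j
    by_cases h : j.1 < n
    · refine ⟨pd (inl ⟨j.1, h⟩) (inr ⟨j.1, h⟩), Finset.mem_image_of_mem _ (Finset.mem_univ _), ?_⟩
      exact pd_one.mpr (Or.inl (by simp [inl, Fin.ext_iff]))
    · have h2 := j.2
      refine ⟨pd (inl ⟨j.1 - n, by omega⟩) (inr ⟨j.1 - n, by omega⟩),
        Finset.mem_image_of_mem _ (Finset.mem_univ _), ?_⟩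
      exact pd_one.mpr (Or.inr (by simp only [inr, Fin.ext_iff]; omega))

end Stmt4
namespace Stmt4

variable {n : ℕ}

lemma pair_determines {Y Y' : Finset (Fin n → Fin 2)} (hY : IsClass 2 n 2 Y)
    (hY' : IsClass 2 n 2 Y') (hd : Disjoint Y Y') {y y' : Fin n → Fin 2}
    (hy : y ∈ Y) (hy' : y' ∈ Y') {a b : Fin n} (ha : a ∈ supp y) (hb : b ∈ supp y)
    (hab : a ≠ b) (ha' : a ∈ supp y') (hb' : b ∈ supp y') : False := by
  have : y = y' := eq_of_two_mem (hY.1 hy) (hY'.1 hy') ha hb hab ha' hb'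
  subst this
  exact Finset.disjoint_left.mp hd hy hy'

lemma disj_T2_T2 {Y Y' : Finset (Fin n → Fin 2)} (hY : IsClass 2 n 2 Y)
    (hY' : IsClass 2 n 2 Y') (hd : Disjoint Y Y') : Disjoint (T2 Y) (T2 Y') := by
  rw [Finset.disjoint_left]
  intro z hz hz'
  obtain ⟨y, hy, a, b, ha, hb, hab, rfl⟩ := mem_cls.mp hz
  obtain ⟨y', hy', a', b', ha', hb', hab', heq⟩ := mem_cls.mp hz'
  obtain ⟨h1, h2⟩ := pd_eq_cases heq
  have ea : a = a' := by
    rcases h1 with h | h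
    · exact inl_inj h
    · exact absurd h inl_ne_inr
  have eb : b = b' := by
    rcases h2 with h | h
    · exact absurd h.symm inl_ne_inr
    · exact inr_inj h
  subst ea; subst eb
  exact pair_determines hY hY' hd hy hy' ha hb hab ha' hb'

lemma disj_T1_T1 {Y Y' : Finset (Fin n → Fin 2)} (hY : IsClass 2 n 2 Y)
    (hY' : IsClass 2 n 2 Y') (hd : Disjoint Y Y') : Disjoint (T1 Y) (T1 Y') := by
  rw [Finset.disjoint_left]
  intro z hz hz'
  rcases Finset.mem_union.mp hz with h | h <;>
    rcases Finset.mem_union.mp hz' with h' | h' <;>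
    obtain ⟨y, hy, a, b, ha, hb, hab, rfl⟩ := mem_cls.mp h <;>
    obtain ⟨y', hy', a', b', ha', hb', hab', heq⟩ := mem_cls.mp h' <;>
    obtain ⟨h1, h2⟩ := pd_eq_cases heq
  · -- inl inl vs inl inl
    rcases h1 with e1 | e1 <;> rcases h2 with e2 | e2
    · exact hab ((inl_inj e1).trans (inl_inj e2).symm)
    · exact pair_determines hY hY' hd hy hy' ha hb hab
        (inl_inj e1 ▸ ha') (inl_inj e2 ▸ hb')
    · exact pair_determines hY hY' hd hy hy' ha hb hab
        (inl_inj e1 ▸ hb') (inl_inj e2 ▸ ha')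
    · exact hab ((inl_inj e1).trans (inl_inj e2).symm)
  · exact inl_ne_inr (h1.resolve_left inl_ne_inr)
  · exact inl_ne_inr (h1.resolve_left (fun e => inl_ne_inr e.symm)).symm
  · -- inr inr vs inr inr
    rcases h1 with e1 | e1 <;> rcases h2 with e2 | e2
    · exact hab ((inr_inj e1).trans (inr_inj e2).symm)
    · exact pair_determines hY hY' hd hy hy' ha hb hab
        (inr_inj e1 ▸ ha') (inr_inj e2 ▸ hb')
    · exact pair_determines hY hY' hd hy hy' ha hb hab
        (inr_inj e1 ▸ hb') (inr_inj e2 ▸ ha')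
    · exact hab ((inr_inj e1).trans (inr_inj e2).symm)

lemma disj_T1_T2 {Y Y' : Finset (Fin n → Fin 2)} : Disjoint (T1 Y) (T2 Y') := by
  rw [Finset.disjoint_left]
  intro z hz hz'
  obtain ⟨y', hy', a', b', ha', hb', hab', heq'⟩ := mem_cls.mp hz'
  rcases Finset.mem_union.mp hz with h | h <;>
    obtain ⟨y, hy, a, b, ha, hb, hab, rfl⟩ := mem_cls.mp h <;>
    obtain ⟨h1, h2⟩ := pd_eq_cases heq'
  · -- z = pd (inl a) (inl b) = pd (inl a') (inr b')
    have e1 : a = a' := inl_inj (h1.resolve_right (fun e => inl_ne_inr e))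
    have e2 : b = a' := inl_inj (h2.resolve_right (fun e => inl_ne_inr e))
    exact hab (e1.trans e2.symm)
  · have e1 : a = b' := inr_inj (h1.resolve_left (fun e => inl_ne_inr e.symm))
    have e2 : b = b' := inr_inj (h2.resolve_left (fun e => inl_ne_inr e.symm))
    exact hab (e1.trans e2.symm)

lemma disj_T1_DD {Y : Finset (Fin n → Fin 2)} : Disjoint (T1 Y) (DD n) := by
  rw [Finset.disjoint_left]
  intro z hz hz'
  obtain ⟨j, -, heq'⟩ := Finset.mem_image.mp hz'
  rcases Finset.mem_union.mp hz with h | h <;>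
    obtain ⟨y, hy, a, b, ha, hb, hab, rfl⟩ := mem_cls.mp h <;>
    obtain ⟨h1, h2⟩ := pd_eq_cases heq'
  · rcases h2 with e | e <;> exact inl_ne_inr e.symm
  · rcases h1 with e | e <;> exact inl_ne_inr e

lemma disj_T2_DD {Y : Finset (Fin n → Fin 2)} : Disjoint (T2 Y) (DD n) := by
  rw [Finset.disjoint_left]
  intro z hz hz'
  obtain ⟨j, -, heq'⟩ := Finset.mem_image.mp hz'
  obtain ⟨y, hy, a, b, ha, hb, hab, rfl⟩ := mem_cls.mp hz
  obtain ⟨h1, h2⟩ := pd_eq_cases heq'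
  have e1 : j = a := inl_inj (h1.resolve_right inl_ne_inr)
  have e2 : j = b := inr_inj (h2.resolve_left (fun e => inl_ne_inr e.symm))
  exact hab (e1.symm.trans e2)

end Stmt4
namespace Stmt4

variable {n : ℕ}

lemma class_nonempty (hn : 1 ≤ n) {Y : Finset (Fin n → Fin 2)} (hY : IsClass 2 n 2 Y) :
    Y.Nonempty := by
  obtain ⟨y, hy, -⟩ := covers_iff.mp hY.2 ⟨0, hn⟩
  exact ⟨y, hy⟩

lemma cls_nonempty {f g : Fin n → Fin (2 * n)} {Y : Finset (Fin n → Fin 2)}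
    (hY : IsClass 2 n 2 Y) {y : Fin n → Fin 2} (hy : y ∈ Y) : (cls f g Y).Nonempty := by
  have hcard : (supp y).card = 2 := by
    have := (Finset.mem_filter.mp (hY.1 hy)).2
    rwa [hw_eq_card] at this
  obtain ⟨a, ha⟩ := Finset.card_pos.mp (by rw [hcard]; norm_num)
  obtain ⟨b, hb, hba⟩ := exists_other (hY.1 hy) ha
  exact ⟨pd (f a) (g b), mem_cls.mpr ⟨y, hy, a, b, ha, hb, fun e => hba e.symm, rfl⟩⟩

lemma T1_nonempty (hn : 1 ≤ n) {Y : Finset (Fin n → Fin 2)} (hY : IsClass 2 n 2 Y) :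
    (T1 Y).Nonempty := by
  obtain ⟨y, hy⟩ := class_nonempty hn hY
  obtain ⟨z, hz⟩ := cls_nonempty (f := inl) (g := inl) hY hy
  exact ⟨z, Finset.mem_union_left _ hz⟩

lemma T2_nonempty (hn : 1 ≤ n) {Y : Finset (Fin n → Fin 2)} (hY : IsClass 2 n 2 Y) :
    (T2 Y).Nonempty := by
  obtain ⟨y, hy⟩ := class_nonempty hn hY
  exact cls_nonempty hY hy

lemma DD_nonempty (hn : 1 ≤ n) : (DD n).Nonempty :=
  ⟨_, Finset.mem_image_of_mem _ (Finset.mem_univ (⟨0, hn⟩ : Fin n))⟩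

lemma bddA (q n i : ℕ) : BddAbove {m | ∃ 𝒴 : Finset (Finset (Fin n → Fin q)),
    (∀ Y ∈ 𝒴, IsClass q n i Y) ∧
    (𝒴 : Set (Finset (Fin n → Fin q))).Pairwise Disjoint ∧ 𝒴.card = m} := by
  refine ⟨Fintype.card (Finset (Fin n → Fin q)), ?_⟩
  rintro m ⟨𝒴, -, -, rfl⟩
  simpa using Finset.card_le_univ 𝒴

end Stmt4

open Stmt4 in
/-- For n ≥ 1, A(2n,2) ≥ 2·A(n,2) + 1. -/
theorem stmt_4 (n : ℕ) (hn : 1 ≤ n) : 2 * A 2 n 2 + 1 ≤ A 2 (2 * n) 2 := by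
  classical
  obtain ⟨𝒴, hcl, hpw, hcard⟩ : ∃ 𝒴 : Finset (Finset (Fin n → Fin 2)),
      (∀ Y ∈ 𝒴, IsClass 2 n 2 Y) ∧
      (𝒴 : Set (Finset (Fin n → Fin 2))).Pairwise Disjoint ∧ 𝒴.card = A 2 n 2 := by
    have h := Nat.sSup_mem (s := {m | ∃ 𝒴 : Finset (Finset (Fin n → Fin 2)),
      (∀ Y ∈ 𝒴, IsClass 2 n 2 Y) ∧
      (𝒴 : Set (Finset (Fin n → Fin 2))).Pairwise Disjoint ∧ 𝒴.card = m})
      ⟨0, ∅, by simp, by simp, rfl⟩ (bddA 2 n 2)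
    exact h
  set 𝒵 : Finset (Finset (Fin (2 * n) → Fin 2)) :=
    (𝒴.image T1 ∪ 𝒴.image T2) ∪ {DD n} with h𝒵
  -- membership characterization
  have hmem𝒵 : ∀ Z ∈ 𝒵, (∃ Y ∈ 𝒴, Z = T1 Y) ∨ (∃ Y ∈ 𝒴, Z = T2 Y) ∨ Z = DD n := by
    intro Z hZ
    simp only [h𝒵, Finset.mem_union, Finset.mem_image, Finset.mem_singleton] at hZ
    rcases hZ with (⟨Y, hY, rfl⟩ | ⟨Y, hY, rfl⟩) | rfl
    · exact Or.inl ⟨Y, hY, rfl⟩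
    · exact Or.inr (Or.inl ⟨Y, hY, rfl⟩)
    · exact Or.inr (Or.inr rfl)
  have hcl2 : ∀ Z ∈ 𝒵, IsClass 2 (2 * n) 2 Z := by
    intro Z hZ
    rcases hmem𝒵 Z hZ with ⟨Y, hY, rfl⟩ | ⟨Y, hY, rfl⟩ | rfl
    · exact isClass_T1 (hcl Y hY)
    · exact isClass_T2 (hcl Y hY)
    · exact isClass_DD hn
  have hdisj : ∀ Z ∈ 𝒵, ∀ Z' ∈ 𝒵, Z ≠ Z' → Disjoint Z Z' := by
    intro Z hZ Z' hZ' hne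
    rcases hmem𝒵 Z hZ with ⟨Y, hY, rfl⟩ | ⟨Y, hY, rfl⟩ | rfl <;>
      rcases hmem𝒵 Z' hZ' with ⟨Y', hY', rfl⟩ | ⟨Y', hY', rfl⟩ | rfl
    · have hYne : Y ≠ Y' := fun e => hne (by rw [e])
      exact disj_T1_T1 (hcl Y hY) (hcl Y' hY') (hpw (Finset.mem_coe.mpr hY) (Finset.mem_coe.mpr hY') hYne)
    · exact disj_T1_T2
    · exact disj_T1_DD
    · exact disj_T1_T2.symm
    · have hYne : Y ≠ Y' := fun e => hne (by rw [e])
      exact disj_T2_T2 (hcl Y hY) (hcl Y' hY') (hpw (Finset.mem_coe.mpr hY) (Finset.mem_coe.mpr hY') hYne)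
    · exact disj_T2_DD
    · exact disj_T1_DD.symm
    · exact disj_T2_DD.symm
    · exact absurd rfl hne
  have hpw2 : (𝒵 : Set (Finset (Fin (2 * n) → Fin 2))).Pairwise Disjoint := by
    intro Z hZ Z' hZ' hne
    exact hdisj Z hZ Z' hZ' hne
  -- cardinality
  have hT1ne : ∀ Y ∈ 𝒴, (T1 Y).Nonempty := fun Y hY => T1_nonempty hn (hcl Y hY)
  have hT2ne : ∀ Y ∈ 𝒴, (T2 Y).Nonempty := fun Y hY => T2_nonempty hn (hcl Y hY)
  have hinj1 : Set.InjOn T1 (𝒴 : Set (Finset (Fin n → Fin 2))) := by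
    intro Y hY Y' hY' he
    by_contra hne
    have hd := disj_T1_T1 (hcl Y hY) (hcl Y' hY') (hpw hY hY' hne)
    rw [he] at hd
    exact (hT1ne Y' hY').ne_empty (disjoint_self.mp hd)
  have hinj2 : Set.InjOn T2 (𝒴 : Set (Finset (Fin n → Fin 2))) := by
    intro Y hY Y' hY' he
    by_contra hne
    have hd := disj_T2_T2 (hcl Y hY) (hcl Y' hY') (hpw hY hY' hne)
    rw [he] at hd
    exact (hT2ne Y' hY').ne_empty (disjoint_self.mp hd)
  have hd12 : Disjoint (𝒴.image T1) (𝒴.image T2) := by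
    rw [Finset.disjoint_left]
    rintro Z hZ1 hZ2
    obtain ⟨Y, hY, rfl⟩ := Finset.mem_image.mp hZ1
    obtain ⟨Y', hY', he⟩ := Finset.mem_image.mp hZ2
    have hd : Disjoint (T1 Y) (T2 Y') := disj_T1_T2
    rw [he] at hd
    exact (hT1ne Y hY).ne_empty (disjoint_self.mp hd)
  have hdD : DD n ∉ 𝒴.image T1 ∪ 𝒴.image T2 := by
    intro hD
    rcases Finset.mem_union.mp hD with h | h
    · obtain ⟨Y, hY, he⟩ := Finset.mem_image.mp h
      have hd : Disjoint (T1 Y) (DD n) := disj_T1_DD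
      rw [he] at hd
      exact (DD_nonempty hn).ne_empty (disjoint_self.mp hd)
    · obtain ⟨Y, hY, he⟩ := Finset.mem_image.mp h
      have hd : Disjoint (T2 Y) (DD n) := disj_T2_DD
      rw [he] at hd
      exact (DD_nonempty hn).ne_empty (disjoint_self.mp hd)
  have hcard2 : 𝒵.card = 2 * A 2 n 2 + 1 := by
    rw [h𝒵, Finset.card_union_of_disjoint (Finset.disjoint_singleton_right.mpr hdD),
      Finset.card_union_of_disjoint hd12, Finset.card_image_of_injOn hinj1,
      Finset.card_image_of_injOn hinj2, Finset.card_singleton, hcard]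
    ring
  calc 2 * A 2 n 2 + 1 = 𝒵.card := hcard2.symm
    _ ≤ A 2 (2 * n) 2 := le_csSup (bddA 2 (2 * n) 2) ⟨𝒵, hcl2, hpw2, rfl⟩
end

section
/- For 2 ≤ i ≤ n, A(n,i) ≤ n − i + 1. -/
open Finset

/-!
Fix a binary `x` of weight `i - 1`. Every class contains a vector of weight `i` dominating `x`, and
disjoint classes contain distinct ones, so `A(n,i)` is at most the number of such vectors. A binary
vector of weight `i` above `x` is `x` with one further coordinate set to `1`, so there are at most
`n - (i - 1)` of them.
-/

section Binary

variable {n : ℕ}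

def ones (x : Fin n → Fin 2) : Finset (Fin n) := univ.filter (x · = 1)

lemma val_eq_ite_eq_one (a : Fin 2) : (a : ℕ) = if a = 1 then 1 else 0 := by
  fin_cases a <;> rfl

lemma hw_eq_card_ones (x : Fin n → Fin 2) : hw x = #(ones x) := by
  simp only [hw, ones, card_filter]
  exact sum_congr rfl fun k _ => val_eq_ite_eq_one (x k)

lemma domLe_iff_ones_subset {x y : Fin n → Fin 2} : domLe x y ↔ ones x ⊆ ones y := by
  simp only [domLe, ones, subset_iff, mem_filter, mem_univ, true_and, val_eq_ite_eq_one]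
  refine forall_congr' fun k => ?_
  split_ifs <;> simp_all

lemma ones_injective : Function.Injective (ones (n := n)) := by
  intro x y h
  funext k
  have hk : x k = 1 ↔ y k = 1 := by simpa [ones] using congrArg (k ∈ ·) h
  rw [Fin.ext_iff, val_eq_ite_eq_one (x k), val_eq_ite_eq_one (y k)]
  simp only [hk]

lemma lev_two_nonempty {m : ℕ} (hm : m ≤ n) : (lev 2 n m).Nonempty := by
  obtain ⟨t, -, ht⟩ := exists_subset_card_eq (s := (univ : Finset (Fin n))) (by simpa using hm)
  refine ⟨fun k => if k ∈ t then 1 else 0, ?_⟩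
  have : ones (fun k => if k ∈ t then (1 : Fin 2) else 0) = t := by ext k; simp [ones]
  simp [lev, hw_eq_card_ones, this, ht]

/-- `y ↦ ones y \ ones x` is injective into the singletons of `(ones x)ᶜ`. -/
lemma card_filter_domLe_lev_succ_le (x : Fin n → Fin 2) :
    #((lev 2 n (hw x + 1)).filter (domLe x)) ≤ n - hw x := by
  have hcard : #(powersetCard 1 (ones x)ᶜ) = n - hw x := by
    simp [card_compl, hw_eq_card_ones]
  rw [← hcard]
  refine card_le_card_of_injOn (fun y => ones y \ ones x) (fun y hy => ?_) (fun y hy z hz h => ?_)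
  · simp only [coe_filter, lev, mem_filter, mem_univ, true_and, Set.mem_ofPred_eq,
      hw_eq_card_ones, domLe_iff_ones_subset] at hy
    refine mem_coe.2 (mem_powersetCard.2 ⟨fun k hk => mem_compl.2 (mem_sdiff.1 hk).2, ?_⟩)
    rw [card_sdiff_of_subset hy.2, hy.1]
    omega
  · simp only [coe_filter, lev, mem_filter, mem_univ, true_and, Set.mem_ofPred_eq,
      domLe_iff_ones_subset] at hy hz
    apply ones_injective
    rw [← union_sdiff_of_subset hy.2, ← union_sdiff_of_subset hz.2]
    exact congrArg (ones x ∪ ·) h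

end Binary

lemma card_le_card_filter_domLe {q n i : ℕ} {𝒴 : Finset (Finset (Fin n → Fin q))}
    (hclass : ∀ Y ∈ 𝒴, IsClass q n i Y)
    (hdisj : (𝒴 : Set (Finset (Fin n → Fin q))).Pairwise Disjoint)
    {x : Fin n → Fin q} (hx : x ∈ lev q n (i - 1)) :
    #𝒴 ≤ #((lev q n i).filter (domLe x)) := by
  classical
  calc #𝒴 ≤ #(𝒴.biUnion (· ∩ (lev q n i).filter (domLe x))) :=
        card_le_card_biUnion
          (fun Y hY Z hZ h => (hdisj hY hZ h).mono inter_subset_left inter_subset_left)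
          fun Y hY => ?_
    _ ≤ _ := card_le_card (biUnion_subset.2 fun _ _ => inter_subset_right)
  obtain ⟨y, hyY, hxy⟩ := (hclass Y hY).2 x hx
  exact ⟨y, mem_inter.2 ⟨hyY, mem_filter.2 ⟨(hclass Y hY).1 hyY, hxy⟩⟩⟩

lemma A_le_of_forall_card_le {q n i N : ℕ}
    (h : ∀ 𝒴 : Finset (Finset (Fin n → Fin q)), (∀ Y ∈ 𝒴, IsClass q n i Y) →
      (𝒴 : Set (Finset (Fin n → Fin q))).Pairwise Disjoint → #𝒴 ≤ N) :
    A q n i ≤ N :=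
  csSup_le' fun _ ⟨𝒴, hclass, hdisj, hcard⟩ => hcard ▸ h 𝒴 hclass hdisj

/-- For 2 ≤ i ≤ n, A(n,i) ≤ n - i + 1. -/
theorem stmt_6 (n i : ℕ) (hi : 2 ≤ i) (hin : i ≤ n) : A 2 n i ≤ n - i + 1 := by
  obtain ⟨x, hx⟩ := lev_two_nonempty (n := n) (m := i - 1) (by omega)
  have hwx : hw x + 1 = i := by simp only [lev, mem_filter] at hx; omega
  refine A_le_of_forall_card_le fun 𝒴 hclass hdisj => ?_
  calc #𝒴 ≤ #((lev 2 n (hw x + 1)).filter (domLe x)) :=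
        hwx ▸ card_le_card_filter_domLe hclass hdisj hx
    _ ≤ n - hw x := card_filter_domLe_lev_succ_le x
    _ = n - i + 1 := by omega
end

section
/- For any n ≥ 0, A(2^n, 2) = 2^n − 1. -/
/-!
Identify a weight-two vector with the pair of its support. A class has to dominate every unit
vector `e_a`, so for a fixed coordinate `a` it contains a pair `{a, b}` with `b ≠ a`; disjoint
classes contain different such pairs, hence there are at most `N - 1` of them.

Conversely, index the coordinates by `(ZMod 2)ⁿ`. For each `g ≠ 0` the pairs `{x, x + g}` form a
perfect matching, hence a class, and the pair `{x, y}` determines `g = x + y`, so the `2ⁿ - 1`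
matchings are pairwise disjoint.
-/

open Finset

section CharVec

variable {N : ℕ}

def charVec (s : Finset (Fin N)) : Fin N → Fin 2 := fun k => if k ∈ s then 1 else 0

lemma charVec_apply_eq_one {s : Finset (Fin N)} {k : Fin N} : charVec s k = 1 ↔ k ∈ s := by
  simp [charVec]

lemma charVec_surjective : Function.Surjective (charVec (N := N)) := by
  intro y
  refine ⟨univ.filter (y · = 1), funext fun k => ?_⟩
  simp only [charVec, mem_filter, mem_univ, true_and]
  split_ifs with hk
  exacts [hk.symm, by omega]

lemma charVec_injective : Function.Injective (charVec (N := N)) := by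
  intro s t h
  ext k
  rw [← charVec_apply_eq_one, h, charVec_apply_eq_one]

lemma hw_charVec (s : Finset (Fin N)) : hw (charVec s) = s.card := by
  simp [hw, charVec, apply_ite]

lemma charVec_mem_lev {s : Finset (Fin N)} {i : ℕ} : charVec s ∈ lev 2 N i ↔ s.card = i := by
  simp [lev, hw_charVec]

lemma domLe_charVec_iff {s t : Finset (Fin N)} : domLe (charVec s) (charVec t) ↔ s ⊆ t := by
  refine ⟨fun h k hk => ?_, fun h k => ?_⟩
  · have := h k
    rw [charVec_apply_eq_one.2 hk] at this
    exact charVec_apply_eq_one.1 (by omega)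
  · by_cases hk : k ∈ s
    · simp [charVec, hk, h hk]
    · simp [charVec, hk]

end CharVec

lemma card_le_A {q n i : ℕ} {𝒴 : Finset (Finset (Fin n → Fin q))}
    (h𝒴 : ∀ Y ∈ 𝒴, IsClass q n i Y)
    (hdisj : (𝒴 : Set (Finset (Fin n → Fin q))).Pairwise Disjoint) : 𝒴.card ≤ A q n i :=
  le_csSup ⟨Fintype.card (Finset (Fin n → Fin q)), fun _ ⟨𝒵, _, _, h𝒵⟩ => h𝒵 ▸ card_le_univ 𝒵⟩
    ⟨𝒴, h𝒴, hdisj, rfl⟩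

section UpperBound

variable {N : ℕ}

lemma IsClass.exists_pair_mem {Y : Finset (Fin N → Fin 2)} (hY : IsClass 2 N 2 Y) (a : Fin N) :
    ∃ b, b ≠ a ∧ charVec {a, b} ∈ Y := by
  obtain ⟨y, hyY, hay⟩ := hY.2 (charVec {a}) (charVec_mem_lev.2 (card_singleton a))
  obtain ⟨s, rfl⟩ := charVec_surjective y
  have ha : a ∈ s := singleton_subset_iff.1 (domLe_charVec_iff.1 hay)
  have hcard : (s.erase a).card = 1 := by
    rw [card_erase_of_mem ha, charVec_mem_lev.1 (hY.1 hyY)]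
  obtain ⟨b, hb⟩ := card_eq_one.1 hcard
  refine ⟨b, (mem_erase.1 (hb ▸ mem_singleton_self b)).1, ?_⟩
  rwa [← hb, insert_erase ha]

lemma card_le_of_pairwise_disjoint_isClass (a : Fin N) {𝒴 : Finset (Finset (Fin N → Fin 2))}
    (h𝒴 : ∀ Y ∈ 𝒴, IsClass 2 N 2 Y)
    (hdisj : (𝒴 : Set (Finset (Fin N → Fin 2))).Pairwise Disjoint) : 𝒴.card ≤ N - 1 := by
  have : Nonempty (Fin N) := ⟨a⟩
  choose! b hb_ne hb_mem using fun Y hY => (h𝒴 Y hY).exists_pair_mem a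
  calc 𝒴.card ≤ (univ.erase a).card :=
        card_le_card_of_injOn b (fun Y hY => mem_erase.2 ⟨hb_ne Y hY, mem_univ _⟩)
          fun Y hY Z hZ hYZ => Set.PairwiseDisjoint.elim_finset (f := id) hdisj hY hZ _
            (hb_mem Y hY) (hYZ ▸ hb_mem Z hZ)
    _ = N - 1 := by simp

lemma A_two_le (hN : 0 < N) : A 2 N 2 ≤ N - 1 :=
  csSup_le' fun _ ⟨_, h𝒴, hdisj, h⟩ => h ▸ card_le_of_pairwise_disjoint_isClass ⟨0, hN⟩ h𝒴 hdisj

end UpperBound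

section LowerBound

variable {G : Type*} [AddGroup G] [DecidableEq G]

lemma eq_of_pair_add_eq_pair_add (h2 : ∀ g : G, g + g = 0) {x z g h : G} (hg : g ≠ 0)
    (hxz : ({x, x + g} : Finset G) = {z, z + h}) : g = h := by
  have hx : x ∈ ({z, z + h} : Finset G) := hxz ▸ mem_insert_self _ _
  have hxg : x + g ∈ ({z, z + h} : Finset G) := hxz ▸ mem_insert_of_mem (mem_singleton_self _)
  simp only [mem_insert, mem_singleton] at hx hxg
  rcases hx with rfl | rfl <;> rcases hxg with hxg | hxg
  · simp_all
  · exact add_left_cancel hxg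
  · -- `x + h + g = x` forces `g = -h`, and `-h = h` in exponent two
    rw [add_assoc, add_eq_left] at hxg
    rw [eq_neg_of_add_eq_zero_right hxg, neg_eq_of_add_eq_zero_left (h2 h)]
  · simp_all

variable [Fintype G] {N : ℕ}

def translationClass (e : G ≃ Fin N) (g : G) : Finset (Fin N → Fin 2) :=
  univ.image fun x => charVec (({x, x + g} : Finset G).map e.toEmbedding)

lemma translationClass_isClass (e : G ≃ Fin N) {g : G} (hg : g ≠ 0) :
    IsClass 2 N 2 (translationClass e g) := by
  refine ⟨fun y hy => ?_, fun v hv => ?_⟩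
  · obtain ⟨x, -, rfl⟩ := mem_image.1 hy
    rw [charVec_mem_lev, card_map, card_pair (by simpa using hg)]
  · obtain ⟨s, rfl⟩ := charVec_surjective v
    obtain ⟨a, rfl⟩ := card_eq_one.1 (charVec_mem_lev.1 hv)
    refine ⟨_, mem_image_of_mem _ (mem_univ (e.symm a)), domLe_charVec_iff.2 ?_⟩
    simp

lemma eq_of_mem_translationClass (e : G ≃ Fin N) (h2 : ∀ g : G, g + g = 0) {g h : G}
    (hg : g ≠ 0) {y : Fin N → Fin 2} (hyg : y ∈ translationClass e g)
    (hyh : y ∈ translationClass e h) : g = h := by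
  obtain ⟨x, -, rfl⟩ := mem_image.1 hyg
  obtain ⟨z, -, hz⟩ := mem_image.1 hyh
  exact eq_of_pair_add_eq_pair_add h2 hg (map_injective _ (charVec_injective hz)).symm

lemma sub_one_le_A_two (e : G ≃ Fin N) (h2 : ∀ g : G, g + g = 0) : N - 1 ≤ A 2 N 2 := by
  have hinj : Set.InjOn (translationClass e) (univ.erase 0 : Finset G) := by
    intro g hg h _ hgh
    exact eq_of_mem_translationClass e h2 (mem_erase.1 hg).1 (mem_image_of_mem _ (mem_univ 0))
      (hgh ▸ mem_image_of_mem _ (mem_univ 0))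
  calc N - 1 = ((univ.erase 0).image (translationClass e)).card := by
        rw [card_image_of_injOn hinj, card_erase_of_mem (mem_univ _), card_univ,
          Fintype.card_congr e, Fintype.card_fin]
    _ ≤ A 2 N 2 := by
      apply card_le_A
      · simp only [mem_image, mem_erase]
        rintro _ ⟨g, ⟨hg, -⟩, rfl⟩
        exact translationClass_isClass e hg
      · simp only [coe_image, coe_erase, coe_univ]
        rintro _ ⟨g, ⟨-, hg⟩, rfl⟩ _ ⟨h, -, rfl⟩ hne
        refine disjoint_left.2 fun y hyg hyh => hne ?_
        rw [eq_of_mem_translationClass e h2 hg hyg hyh]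

end LowerBound

/-- For n ≥ 0, A(2^n,2) = 2^n - 1. -/
theorem stmt_7 (n : ℕ) : A 2 (2 ^ n) 2 = 2 ^ n - 1 := by
  have e : (Fin n → ZMod 2) ≃ Fin (2 ^ n) := Fintype.equivFinOfCardEq (by simp)
  exact le_antisymm (A_two_le (by positivity))
    (sub_one_le_A_two e fun g => funext fun i => CharTwo.add_self_eq_zero (g i))
end

section
/- For any n ≥ 1, A(2^n + 1, 2) = 2^n − 1. -/
open Finset

/-!
A codeword class at level two is a set of weight-two vectors whose supports cover all `N`
coordinates, so it has at least `N / 2` members. For odd `N = 2k + 1` there are only `k (2k + 1)`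
weight-two vectors, hence at most `2k - 1` disjoint classes.

Conversely, identify the first `2^n` coordinates with a group `G` of exponent two and the last one
with a point `∞`, and label a weight-two vector by the sum of the elements of `G` in its support.
For `g ≠ 0` the vectors with label `g` include the pairs `{x, x + g}` and `{g, ∞}`, so they cover
every coordinate; distinct labels give disjoint classes, which yields `2^n - 1` of them.
-/

section BinaryVectors

variable {N : ℕ}

def supp (x : Fin N → Fin 2) : Finset (Fin N) := univ.filter (x · = 1)

@[simp]
theorem mem_supp {x : Fin N → Fin 2} {k : Fin N} : k ∈ supp x ↔ x k = 1 := by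
  simp [supp]

theorem supp_injective : Function.Injective (supp (N := N)) := by
  intro x y h
  funext k
  have hk : x k = 1 ↔ y k = 1 := by rw [← mem_supp, h, mem_supp]
  revert hk
  generalize x k = a
  generalize y k = b
  revert a b
  decide

theorem hw_eq_card_supp (x : Fin N → Fin 2) : hw x = #(supp x) := by
  rw [hw, supp, card_filter]
  refine sum_congr rfl fun k _ => ?_
  generalize x k = a
  revert a
  decide

theorem mem_lev_iff {x : Fin N → Fin 2} {i : ℕ} : x ∈ lev 2 N i ↔ #(supp x) = i := by
  simp [lev, hw_eq_card_supp]

def indicatorVec (s : Finset (Fin N)) : Fin N → Fin 2 := fun k => if k ∈ s then 1 else 0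

@[simp]
theorem supp_indicatorVec (s : Finset (Fin N)) : supp (indicatorVec s) = s := by
  ext k
  by_cases hk : k ∈ s <;> simp [indicatorVec, hk]

theorem indicatorVec_pair_mem_lev {a b : Fin N} (hab : a ≠ b) : indicatorVec {a, b} ∈ lev 2 N 2 :=
  mem_lev_iff.2 (by rw [supp_indicatorVec, card_pair hab])

theorem card_lev_le_choose (i : ℕ) : #(lev 2 N i) ≤ N.choose i := by
  calc #(lev 2 N i) ≤ #(powersetCard i (univ : Finset (Fin N))) :=
        card_le_card_of_injOn supp
          (fun x hx => by simpa [mem_powersetCard] using mem_lev_iff.1 hx)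
          supp_injective.injOn
    _ = N.choose i := by simp

theorem covers_two_iff {Y : Finset (Fin N → Fin 2)} :
    Covers 2 N 2 Y ↔ ∀ a, ∃ y ∈ Y, y a = 1 := by
  constructor
  · intro h a
    obtain ⟨y, hy, hdom⟩ := h (indicatorVec {a}) (mem_lev_iff.2 (by simp))
    refine ⟨y, hy, ?_⟩
    have := hdom a
    simp only [indicatorVec, mem_singleton, if_true, Fin.val_one] at this
    omega
  · intro h x hx
    obtain ⟨a, ha⟩ := card_eq_one.1 (mem_lev_iff.1 hx)
    obtain ⟨y, hy, hya⟩ := h a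
    refine ⟨y, hy, fun k => ?_⟩
    by_cases hk : k = a
    · subst hk
      rw [hya]
      omega
    · have : x k ≠ 1 := fun hxk => hk (by simpa [ha] using mem_supp.2 hxk)
      omega

end BinaryVectors

section UpperBound

variable {N : ℕ}

theorem IsClass.le_two_mul_card {Y : Finset (Fin N → Fin 2)} (hY : IsClass 2 N 2 Y) :
    N ≤ 2 * #Y := by
  have hcover : (univ : Finset (Fin N)) ⊆ Y.biUnion supp := fun a _ => by
    obtain ⟨y, hy, hya⟩ := covers_two_iff.1 hY.2 a
    exact mem_biUnion.2 ⟨y, hy, mem_supp.2 hya⟩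
  calc N = #(univ : Finset (Fin N)) := by simp
    _ ≤ ∑ y ∈ Y, #(supp y) := (card_le_card hcover).trans card_biUnion_le
    _ = ∑ _y ∈ Y, 2 := sum_congr rfl fun y hy => mem_lev_iff.1 (hY.1 hy)
    _ = 2 * #Y := by rw [sum_const, smul_eq_mul, mul_comm]

theorem card_le_sub_two_of_odd (hN : Odd N) {𝒴 : Finset (Finset (Fin N → Fin 2))}
    (h𝒴 : ∀ Y ∈ 𝒴, IsClass 2 N 2 Y) (hdisj : (𝒴 : Set (Finset (Fin N → Fin 2))).Pairwise Disjoint) :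
    #𝒴 ≤ N - 2 := by
  obtain ⟨k, rfl⟩ := hN
  have hclass : ∀ Y ∈ 𝒴, k + 1 ≤ #Y := fun Y hY => by
    have := (h𝒴 Y hY).le_two_mul_card
    omega
  have hchoose : (2 * k + 1).choose 2 = k * (2 * k + 1) := by
    rw [Nat.choose_two_right, Nat.add_sub_cancel]
    exact Nat.div_eq_of_eq_mul_left two_pos (by ring)
  have hcount : #𝒴 * (k + 1) ≤ k * (2 * k + 1) :=
    calc #𝒴 * (k + 1) ≤ ∑ Y ∈ 𝒴, #Y := by simpa using card_nsmul_le_sum 𝒴 card (k + 1) hclass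
      _ = #(𝒴.biUnion id) := (card_biUnion hdisj).symm
      _ ≤ #(lev 2 (2 * k + 1) 2) := card_le_card (biUnion_subset.2 fun Y hY => (h𝒴 Y hY).1)
      _ ≤ k * (2 * k + 1) := hchoose ▸ card_lev_le_choose 2
  by_contra! hlt
  have hm : 2 * k ≤ #𝒴 ∧ 1 ≤ #𝒴 := by omega
  nlinarith

end UpperBound

section Construction

variable {G : Type*} [AddCommGroup G] [Fintype G] [DecidableEq G] {M : ℕ} (e : G ≃ Fin M)

def coordEmb : G ↪ Fin (M + 1) := e.toEmbedding.trans Fin.castSuccEmb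

def pairLabel (y : Fin (M + 1) → Fin 2) : G :=
  ∑ g ∈ univ.filter (fun g => y (coordEmb e g) = 1), g

def labelClass (g : G) : Finset (Fin (M + 1) → Fin 2) :=
  (lev 2 (M + 1) 2).filter (pairLabel e · = g)

theorem pairLabel_indicatorVec_pair {a b : G} (hab : a ≠ b) :
    pairLabel e (indicatorVec {coordEmb e a, coordEmb e b}) = a + b := by
  have : univ.filter (fun g => indicatorVec {coordEmb e a, coordEmb e b} (coordEmb e g) = 1) =
      {a, b} := by
    ext g
    simp [← mem_supp]
  rw [pairLabel, this, sum_pair hab]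

theorem pairLabel_indicatorVec_last (a : G) :
    pairLabel e (indicatorVec {coordEmb e a, Fin.last M}) = a := by
  have : univ.filter (fun g => indicatorVec {coordEmb e a, Fin.last M} (coordEmb e g) = 1) =
      {a} := by
    ext g
    simp [← mem_supp, coordEmb, Fin.castSucc_ne_last]
  rw [pairLabel, this, sum_singleton]

theorem labelClass_isClass (hG : ∀ x : G, x + x = 0) {g : G} (hg : g ≠ 0) :
    IsClass 2 (M + 1) 2 (labelClass e g) := by
  refine ⟨filter_subset _ _, covers_two_iff.2 fun a => ?_⟩
  induction a using Fin.lastCases with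
  | last =>
    refine ⟨indicatorVec {coordEmb e g, Fin.last M}, mem_filter.2 ⟨?_, ?_⟩, ?_⟩
    · exact indicatorVec_pair_mem_lev (by simp [coordEmb, Fin.castSucc_ne_last])
    · exact pairLabel_indicatorVec_last e g
    · simp [← mem_supp]
  | cast i =>
    obtain ⟨h, rfl⟩ := e.surjective i
    have hne : h ≠ h + g := fun hh => hg (by simpa using hh)
    refine ⟨indicatorVec {coordEmb e h, coordEmb e (h + g)}, mem_filter.2 ⟨?_, ?_⟩, ?_⟩
    · exact indicatorVec_pair_mem_lev ((coordEmb e).injective.ne hne)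
    · rw [pairLabel_indicatorVec_pair e hne, ← add_assoc, hG, zero_add]
    · simp [← mem_supp, coordEmb]

end Construction

theorem exists_pairwiseDisjoint_classes {G : Type*} [AddCommGroup G] [Fintype G] [DecidableEq G]
    (hG : ∀ x : G, x + x = 0) {M : ℕ} (hcard : Fintype.card G = M) :
    ∃ 𝒴 : Finset (Finset (Fin (M + 1) → Fin 2)), (∀ Y ∈ 𝒴, IsClass 2 (M + 1) 2 Y) ∧
      (𝒴 : Set (Finset (Fin (M + 1) → Fin 2))).Pairwise Disjoint ∧ #𝒴 = M - 1 := by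
  let e := Fintype.equivFinOfCardEq hcard
  have hlast (g : G) (hg : g ≠ 0) : ∃ y ∈ labelClass e g, y (Fin.last M) = 1 :=
    covers_two_iff.1 (labelClass_isClass e hG hg).2 _
  have hinj : Set.InjOn (labelClass e) (univ.erase 0 : Finset G) := by
    intro g hg g' _ hgg'
    obtain ⟨y, hy, -⟩ := hlast g (ne_of_mem_erase hg)
    have hy' : y ∈ labelClass e g' := hgg' ▸ hy
    exact (mem_filter.1 hy).2.symm.trans (mem_filter.1 hy').2
  refine ⟨(univ.erase 0).image (labelClass e), ?_, ?_, ?_⟩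
  · simp only [mem_image, mem_erase, mem_univ, and_true]
    rintro _ ⟨g, hg, rfl⟩
    exact labelClass_isClass e hG hg
  · rw [coe_image]
    rintro _ ⟨g, -, rfl⟩ _ ⟨g', -, rfl⟩ hne
    exact disjoint_filter.2 fun _ _ h h' => hne (congrArg _ (h.symm.trans h'))
  · rw [card_image_of_injOn hinj, card_erase_of_mem (mem_univ _), card_univ, hcard]

theorem A_eq_of_exists_of_forall_le {q N i m : ℕ}
    (hex : ∃ 𝒴 : Finset (Finset (Fin N → Fin q)), (∀ Y ∈ 𝒴, IsClass q N i Y) ∧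
      (𝒴 : Set (Finset (Fin N → Fin q))).Pairwise Disjoint ∧ #𝒴 = m)
    (hle : ∀ 𝒴 : Finset (Finset (Fin N → Fin q)), (∀ Y ∈ 𝒴, IsClass q N i Y) →
      (𝒴 : Set (Finset (Fin N → Fin q))).Pairwise Disjoint → #𝒴 ≤ m) :
    A q N i = m :=
  IsGreatest.csSup_eq ⟨hex, by rintro _ ⟨𝒴, h𝒴, hdisj, rfl⟩; exact hle 𝒴 h𝒴 hdisj⟩

/-- For n ≥ 1, A(2^n + 1, 2) = 2^n - 1. -/
theorem stmt_9 (n : ℕ) (hn : 1 ≤ n) : A 2 (2 ^ n + 1) 2 = 2 ^ n - 1 := by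
  have hG : ∀ x : Fin n → Fin 2, x + x = 0 := fun x => funext fun k => by
    simpa using (by decide : ∀ a : Fin 2, a + a = 0) (x k)
  have hodd : Odd (2 ^ n + 1) := (Nat.even_pow.2 ⟨even_two, by omega⟩).add_one
  refine A_eq_of_exists_of_forall_le ?_ fun 𝒴 h𝒴 hdisj => ?_
  · exact exists_pairwiseDisjoint_classes hG (by simp)
  · have := card_le_sub_two_of_odd hodd h𝒴 hdisj
    omega
end

section
/- For n ≥ 0 and q ≥ 3, A_q(2n+1, 2) ≥ 2n+1. Specifically, the set Y_0 = { e_{n+1−k} + e_{n+1+k} : 0 ≤ k ≤ n } ⊆ E_q(2n+1,2) dominates every unit vector of length 2n+1, and its 2n+1 cyclic shifts are pairwise disjoint subsets of E_q(2n+1,2), each dominating every unit vector. -/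
open Finset

/-- The j-th standard unit vector of length N over the alphabet {0,…,q-1}. -/
def unitVec {N q : ℕ} [NeZero q] (j : Fin N) : Fin N → Fin q :=
  fun k => if k = j then 1 else 0

open Fin.NatCast in
/-- The class Y₀ = { e_{n+1-k} + e_{n+1+k} : 0 ≤ k ≤ n } ⊆ E_q(2n+1,2)
(0-indexed: center index n, indices n-k and n+k, taken modulo 2n+1). -/
def Y0 (n q : ℕ) [NeZero q] : Finset (Fin (2 * n + 1) → Fin q) :=
  (Finset.range (n + 1)).image
    (fun (k : ℕ) => unitVec ((⟨n, by omega⟩ : Fin (2 * n + 1)) - (k : Fin (2 * n + 1)))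
            + unitVec ((⟨n, by omega⟩ : Fin (2 * n + 1)) + (k : Fin (2 * n + 1))))

/-- Cyclic shift of a set of vectors by s. -/
def shiftC {N q : ℕ} (s : Fin N) (Y : Finset (Fin N → Fin q)) : Finset (Fin N → Fin q) :=
  Y.image (fun x => fun j => x (j - s))

/-! Read modulo `2n + 1`, `Y0` is the set of pairs `e_a + e_b` with `a + b = 2n`, and its shift by
`s` is the set of pairs with `a + b = 2(n + s)`. Every index `j` has the partner `2(n + s) - j`, so
each shift dominates every unit vector. The first moment `∑ j, x_j • j` of every vector in the
`s`-th shift is `2(n + s)`, and `2` is invertible modulo the odd number `2n + 1`, so the moment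
determines `s`: the shifts are pairwise disjoint. -/

open Fin.NatCast Function

section unitVec
variable {N q : ℕ} [NeZero q]

lemma val_unitVec (hq : 1 < q) (a k : Fin N) :
    ((unitVec a k : Fin q) : ℕ) = if k = a then 1 else 0 := by
  unfold unitVec
  split_ifs
  · exact Nat.mod_eq_of_lt hq
  · rfl

lemma val_unitVec_add_unitVec (hq : 3 ≤ q) (a b k : Fin N) :
    (((unitVec a + unitVec b : Fin N → Fin q) k : Fin q) : ℕ)
      = (if k = a then 1 else 0) + (if k = b then 1 else 0) := by
  rw [Pi.add_apply, Fin.val_add, val_unitVec (by omega), val_unitVec (by omega)]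
  exact Nat.mod_eq_of_lt (by split_ifs <;> omega)

lemma hw_unitVec_add_unitVec (hq : 3 ≤ q) (a b : Fin N) :
    hw (unitVec a + unitVec b : Fin N → Fin q) = 2 := by
  simp only [hw, val_unitVec_add_unitVec hq]
  simp [Finset.sum_add_distrib]

lemma domLe_unitVec_add_unitVec (hq : 3 ≤ q) {j a b : Fin N} (h : j = a ∨ j = b) :
    domLe (unitVec j) (unitVec a + unitVec b : Fin N → Fin q) := by
  intro k
  rw [val_unitVec (by omega), val_unitVec_add_unitVec hq]
  rcases h with rfl | rfl <;> split_ifs <;> simp_all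

lemma exists_eq_unitVec_of_hw_eq_one (hq : 1 < q) {x : Fin N → Fin q} (hx : hw x = 1) :
    ∃ j, x = unitVec j := by
  obtain ⟨j, -, hj⟩ := Finset.exists_ne_zero_of_sum_ne_zero (hx.trans_ne one_ne_zero)
  have hxj : (x j : ℕ) ≤ 1 :=
    hx ▸ Finset.single_le_sum (f := fun i => (x i : ℕ)) (fun _ _ => Nat.zero_le _) (mem_univ j)
  have hpair (k : Fin N) (hk : k ≠ j) : (x j : ℕ) + x k ≤ 1 := by
    rw [← hx, hw, ← Finset.sum_pair (f := fun i => (x i : ℕ)) hk.symm]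
    exact Finset.sum_le_sum_of_subset (Finset.subset_univ _)
  refine ⟨j, funext fun k => Fin.ext ?_⟩
  rw [val_unitVec hq]
  split_ifs with hk
  · subst hk; omega
  · have := hpair k hk; omega

lemma shift_unitVec_add_unitVec [NeZero N] (a b s : Fin N) :
    (fun j => (unitVec a + unitVec b : Fin N → Fin q) (j - s))
      = unitVec (a + s) + unitVec (b + s) := by
  funext j
  simp only [Pi.add_apply, unitVec, sub_eq_iff_eq_add]

end unitVec

def moment {N q : ℕ} [NeZero N] (x : Fin N → Fin q) : Fin N := ∑ j, (x j : ℕ) • j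

lemma moment_unitVec_add_unitVec {N q : ℕ} [NeZero N] [NeZero q] (hq : 3 ≤ q) (a b : Fin N) :
    moment (unitVec a + unitVec b : Fin N → Fin q) = a + b := by
  simp only [moment, val_unitVec_add_unitVec hq]
  simp [add_smul, Finset.sum_add_distrib]

lemma Fin.two_nsmul_injective (n : ℕ) : Injective fun s : Fin (2 * n + 1) => 2 • s :=
  (Nat.Coprime.nsmul_right_bijective (by simp)).injective

lemma Fin.exists_le_eq_natCast_or_eq_neg_natCast {n : ℕ} (d : Fin (2 * n + 1)) :
    ∃ k ≤ n, d = (k : Fin (2 * n + 1)) ∨ d = -(k : Fin (2 * n + 1)) := by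
  by_cases hd : (d : ℕ) ≤ n
  · exact ⟨d, hd, Or.inl (Fin.cast_val_eq_self d).symm⟩
  · refine ⟨2 * n + 1 - d, by omega, Or.inr ?_⟩
    rw [eq_neg_iff_add_eq_zero, Fin.ext_iff, Fin.val_add, Fin.val_natCast,
      Nat.mod_eq_of_lt (show 2 * n + 1 - (d : ℕ) < 2 * n + 1 by omega),
      Nat.add_sub_cancel' d.isLt.le, Nat.mod_self, Fin.val_zero]

lemma card_le_A_s14 {ι : Type*} [Fintype ι] {q N i : ℕ} (Y : ι → Finset (Fin N → Fin q))
    (hY : ∀ s, IsClass q N i (Y s)) (hne : ∀ s, (Y s).Nonempty)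
    (hdisj : Pairwise (Disjoint on Y)) :
    Fintype.card ι ≤ A q N i := by
  have hinj : Injective Y := pairwise_ne_iff_injective.mp fun s t hst heq => by
    have : Disjoint (Y s) (Y t) := hdisj hst
    rw [heq, disjoint_self] at this
    exact (hne t).ne_empty this
  refine le_csSup ⟨Fintype.card (Finset (Fin N → Fin q)), ?_⟩ ⟨univ.image Y, ?_, ?_, ?_⟩
  · rintro m ⟨𝒴, -, -, rfl⟩
    exact card_le_univ 𝒴
  · simpa using hY
  · rw [coe_image, coe_univ, Set.image_univ]
    exact hdisj.range_pairwise
  · exact card_image_of_injective _ hinj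

lemma shiftC_zero {N q : ℕ} [NeZero N] (Y : Finset (Fin N → Fin q)) : shiftC 0 Y = Y := by
  simp [shiftC]

section Y0
variable {n q : ℕ} [NeZero q]

lemma mem_shiftC_Y0 {s : Fin (2 * n + 1)} {x : Fin (2 * n + 1) → Fin q} :
    x ∈ shiftC s (Y0 n q) ↔ ∃ k ≤ n,
      x = unitVec ((⟨n, by omega⟩ : Fin (2 * n + 1)) - (k : Fin (2 * n + 1)) + s)
        + unitVec ((⟨n, by omega⟩ : Fin (2 * n + 1)) + (k : Fin (2 * n + 1)) + s) := by
  simp only [shiftC, Y0, mem_image, mem_range, Nat.lt_succ_iff, exists_exists_and_eq_and,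
    shift_unitVec_add_unitVec]
  simp only [eq_comm]

lemma moment_of_mem_shiftC_Y0 (hq : 3 ≤ q) {s : Fin (2 * n + 1)} {x : Fin (2 * n + 1) → Fin q}
    (hx : x ∈ shiftC s (Y0 n q)) :
    moment x = 2 • ((⟨n, by omega⟩ : Fin (2 * n + 1)) + s) := by
  obtain ⟨k, -, rfl⟩ := mem_shiftC_Y0.mp hx
  rw [moment_unitVec_add_unitVec hq]
  abel

lemma disjoint_shiftC_Y0 (hq : 3 ≤ q) {s s' : Fin (2 * n + 1)} (h : s ≠ s') :
    Disjoint (shiftC s (Y0 n q)) (shiftC s' (Y0 n q)) :=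
  disjoint_left.mpr fun _ hx hx' => h <| add_left_cancel <| Fin.two_nsmul_injective n <|
    (moment_of_mem_shiftC_Y0 hq hx).symm.trans (moment_of_mem_shiftC_Y0 hq hx')

lemma isClass_shiftC_Y0 (hq : 3 ≤ q) (s : Fin (2 * n + 1)) :
    IsClass q (2 * n + 1) 2 (shiftC s (Y0 n q)) := by
  refine ⟨fun x hx => ?_, fun x hx => ?_⟩
  · obtain ⟨k, -, rfl⟩ := mem_shiftC_Y0.mp hx
    simpa [lev] using hw_unitVec_add_unitVec hq _ _
  · obtain ⟨j, rfl⟩ := exists_eq_unitVec_of_hw_eq_one (by omega) (mem_filter.mp hx).2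
    obtain ⟨k, hk, hjk⟩ :=
      Fin.exists_le_eq_natCast_or_eq_neg_natCast (j - s - (⟨n, by omega⟩ : Fin (2 * n + 1)))
    refine ⟨_, mem_shiftC_Y0.mpr ⟨k, hk, rfl⟩, domLe_unitVec_add_unitVec hq ?_⟩
    rcases hjk with hjk | hjk
    · right
      rw [← hjk]
      abel
    · left
      rw [sub_eq_add_neg, ← hjk]
      abel

lemma shiftC_Y0_nonempty (s : Fin (2 * n + 1)) : (shiftC s (Y0 n q)).Nonempty :=
  ⟨_, mem_shiftC_Y0.mpr ⟨0, Nat.zero_le n, rfl⟩⟩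

end Y0

/-- For n ≥ 0 and q ≥ 3, A_q(2n+1,2) ≥ 2n+1. Specifically, Y₀ is a subset of
E_q(2n+1,2) dominating every unit vector (i.e., a codeword class), and its 2n+1 cyclic
shifts are pairwise disjoint codeword classes in E_q(2n+1,2). -/
theorem stmt_14 (n q : ℕ) (hq : 3 ≤ q) [NeZero q] :
    2 * n + 1 ≤ A q (2 * n + 1) 2 ∧
    IsClass q (2 * n + 1) 2 (Y0 n q) ∧
    (∀ s s' : Fin (2 * n + 1), s ≠ s' →
      Disjoint (shiftC s (Y0 n q)) (shiftC s' (Y0 n q))) ∧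
    (∀ s : Fin (2 * n + 1), IsClass q (2 * n + 1) 2 (shiftC s (Y0 n q))) := by
  have hclass := isClass_shiftC_Y0 (n := n) hq
  have hdisj (s s' : Fin (2 * n + 1)) (h : s ≠ s') := disjoint_shiftC_Y0 (q := q) hq h
  refine ⟨?_, shiftC_zero (Y0 n q) ▸ hclass 0, hdisj, hclass⟩
  simpa using card_le_A_s14 _ hclass shiftC_Y0_nonempty hdisj
end
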